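/- arXiv:1708.07072 — 2 statements merged into one kernel-verified Lean document; each statement's English description precedes it below -/
import Mathlib

section
/- Let $R'$ be the subring of the fraction field $Q = \mathrm{Frac}(R)$ of a polynomial ring $R = \Bbbk[a_s : s \in S_{\rm f}]$ generated by $R$ together with all fractions $a_s/a_t$ for $s,t \in S_{\rm f}$. Then for any $s \in S_{\rm f}$ the ideal $\mathfrak{p}' = R' a_s$ is prime and is independent of the choice of $s$. -/
set_option maxHeartbeats 4000000
set_option synthInstance.maxHeartbeats 1000000

section Aux

variable {k : Type*} [Field k] {Sf : Type*}

local notation "Q'" => FractionRing (MvPolynomial Sf k)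
local notation "B'" => Polynomial (FractionRing (MvPolynomial Sf k))

/-- `X t ↦ u * x_t` where `u` is the polynomial variable. -/
noncomputable def stmt5toB : MvPolynomial Sf k →+* Polynomial (FractionRing (MvPolynomial Sf k)) :=
  MvPolynomial.eval₂Hom (Polynomial.C.comp (algebraMap k Q'))
    (fun t => Polynomial.X * Polynomial.C (algebraMap (MvPolynomial Sf k) Q' (MvPolynomial.X t)))

lemma stmt5toB_injective : Function.Injective (stmt5toB (k := k) (Sf := Sf)) := by
  have h : (Polynomial.evalRingHom (1 : Q')).comp (stmt5toB (k := k) (Sf := Sf)) =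
      algebraMap (MvPolynomial Sf k) Q' := by
    apply MvPolynomial.ringHom_ext
    · intro a
      simp only [RingHom.comp_apply, stmt5toB, MvPolynomial.eval₂Hom_C, Polynomial.coe_evalRingHom,
        Polynomial.eval_C, IsScalarTower.algebraMap_apply k (MvPolynomial Sf k) Q',
        MvPolynomial.algebraMap_eq]
    · intro n
      simp [stmt5toB]
  have : Function.Injective ((Polynomial.evalRingHom (1 : Q')).comp
      (stmt5toB (k := k) (Sf := Sf))) := by
    rw [h]; exact IsFractionRing.injective _ _
  exact Function.Injective.of_comp this

noncomputable def stmt5Psi : FractionRing (MvPolynomial Sf k) →+* FractionRing B' :=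
  IsFractionRing.lift (g := (algebraMap B' (FractionRing B')).comp stmt5toB)
    (by rw [RingHom.coe_comp]; exact (IsFractionRing.injective _ _).comp stmt5toB_injective)

lemma stmt5Psi_algebraMap (f : MvPolynomial Sf k) :
    stmt5Psi (algebraMap (MvPolynomial Sf k) Q' f) =
      algebraMap B' (FractionRing B') (stmt5toB f) :=
  IsFractionRing.lift_algebraMap _ f

lemma stmt5Psi_x (t : Sf) :
    stmt5Psi (algebraMap (MvPolynomial Sf k) Q' (MvPolynomial.X t)) =
      algebraMap B' (FractionRing B')
        (Polynomial.X * Polynomial.C (algebraMap (MvPolynomial Sf k) Q' (MvPolynomial.X t))) := by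
  rw [stmt5Psi_algebraMap]
  simp [stmt5toB]

lemma stmt5x_ne_zero [Nontrivial (MvPolynomial Sf k)] (t : Sf) :
    algebraMap (MvPolynomial Sf k) Q' (MvPolynomial.X t) ≠ 0 :=
  fun h => MvPolynomial.X_ne_zero t
    (IsFractionRing.injective (MvPolynomial Sf k) Q' (by rw [h, map_zero]))

/-- The inductive predicate: `q` lies in `R'`, its image under `Ψ` is an honest polynomial `p`
in the extra variable, the constant coefficient of `p` lies in `R'`, and `q` minus that constant
coefficient is `x_s` times an element of `R'`. -/
def stmt5Pred (R' : Subalgebra k (FractionRing (MvPolynomial Sf k))) (s : Sf) (q : Q') : Prop :=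
  q ∈ R' ∧ ∃ p : B', stmt5Psi q = algebraMap B' (FractionRing B') p ∧ p.coeff 0 ∈ R' ∧
    ∃ r, r ∈ R' ∧ q - p.coeff 0 = algebraMap (MvPolynomial Sf k) Q' (MvPolynomial.X s) * r

lemma stmt5Pred_mul {R' : Subalgebra k (FractionRing (MvPolynomial Sf k))} {s : Sf} {q₁ q₂ : Q'}
    (h1 : stmt5Pred R' s q₁) (h2 : stmt5Pred R' s q₂) : stmt5Pred R' s (q₁ * q₂) := by
  obtain ⟨hm1, p1, hp1, hc1, r1, hr1, he1⟩ := h1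
  obtain ⟨hm2, p2, hp2, hc2, r2, hr2, he2⟩ := h2
  refine ⟨mul_mem hm1 hm2, p1 * p2, ?_, ?_, q₁ * r2 + p2.coeff 0 * r1, ?_, ?_⟩
  · rw [map_mul, hp1, hp2, map_mul]
  · rw [Polynomial.mul_coeff_zero]; exact mul_mem hc1 hc2
  · exact add_mem (mul_mem hm1 hr2) (mul_mem hc2 hr1)
  · rw [Polynomial.mul_coeff_zero]
    linear_combination q₁ * he2 + p2.coeff 0 * he1

lemma stmt5Pred_add {R' : Subalgebra k (FractionRing (MvPolynomial Sf k))} {s : Sf} {q₁ q₂ : Q'}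
    (h1 : stmt5Pred R' s q₁) (h2 : stmt5Pred R' s q₂) : stmt5Pred R' s (q₁ + q₂) := by
  obtain ⟨hm1, p1, hp1, hc1, r1, hr1, he1⟩ := h1
  obtain ⟨hm2, p2, hp2, hc2, r2, hr2, he2⟩ := h2
  refine ⟨add_mem hm1 hm2, p1 + p2, ?_, ?_, r1 + r2, add_mem hr1 hr2, ?_⟩
  · rw [map_add, hp1, hp2, map_add]
  · rw [Polynomial.coeff_add]; exact add_mem hc1 hc2
  · rw [Polynomial.coeff_add]
    linear_combination he1 + he2

lemma stmt5_key {R' : Subalgebra k (FractionRing (MvPolynomial Sf k))}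
    (hR' : R' = Algebra.adjoin k
      (Set.range (algebraMap (MvPolynomial Sf k) (FractionRing (MvPolynomial Sf k))) ∪
        {q : FractionRing (MvPolynomial Sf k) | ∃ s t : Sf,
          q = algebraMap (MvPolynomial Sf k) (FractionRing (MvPolynomial Sf k))
                (MvPolynomial.X s) /
              algebraMap (MvPolynomial Sf k) (FractionRing (MvPolynomial Sf k))
                (MvPolynomial.X t)}))
    (s : Sf) {q : Q'} (hq : q ∈ R') : stmt5Pred R' s q := by
  have hratio_mem : ∀ a b : Sf,
      algebraMap (MvPolynomial Sf k) Q' (MvPolynomial.X a) /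
        algebraMap (MvPolynomial Sf k) Q' (MvPolynomial.X b) ∈ R' := by
    intro a b
    rw [hR']
    exact Algebra.subset_adjoin (Or.inr ⟨a, b, rfl⟩)
  have hiX : ∀ b : Sf, (algebraMap B' (FractionRing B'))
      (Polynomial.X * Polynomial.C (algebraMap (MvPolynomial Sf k) Q' (MvPolynomial.X b))) ≠ 0 := by
    intro b h
    exact mul_ne_zero Polynomial.X_ne_zero
      (Polynomial.C_ne_zero.mpr (stmt5x_ne_zero b))
      (IsFractionRing.injective B' (FractionRing B') (by rw [h, map_zero]))
  -- the X-variable case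
  have hxt : ∀ t : Sf, stmt5Pred R' s (algebraMap (MvPolynomial Sf k) Q' (MvPolynomial.X t)) := by
    intro t
    refine ⟨?_, Polynomial.X * Polynomial.C (algebraMap (MvPolynomial Sf k) Q' (MvPolynomial.X t)),
      stmt5Psi_x t, ?_,
      algebraMap (MvPolynomial Sf k) Q' (MvPolynomial.X t) /
        algebraMap (MvPolynomial Sf k) Q' (MvPolynomial.X s), hratio_mem t s, ?_⟩
    · rw [hR']
      exact Algebra.subset_adjoin (Or.inl ⟨MvPolynomial.X t, rfl⟩)
    · rw [Polynomial.mul_coeff_zero, Polynomial.coeff_X_zero, zero_mul]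
      exact zero_mem _
    · rw [Polynomial.mul_coeff_zero, Polynomial.coeff_X_zero, zero_mul, sub_zero,
        mul_comm, div_mul_cancel₀ _ (stmt5x_ne_zero s)]
  -- the scalar case
  have hconst : ∀ c : k, stmt5Pred R' s (algebraMap k Q' c) := by
    intro c
    have hcc : algebraMap k Q' c = algebraMap (MvPolynomial Sf k) Q' (MvPolynomial.C c) := by
      rw [IsScalarTower.algebraMap_apply k (MvPolynomial Sf k) Q', MvPolynomial.algebraMap_eq]
    refine ⟨Subalgebra.algebraMap_mem R' c, Polynomial.C (algebraMap k Q' c), ?_, ?_, 0,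
      zero_mem _, ?_⟩
    · rw [hcc, stmt5Psi_algebraMap]
      simp only [stmt5toB, MvPolynomial.eval₂Hom_C, RingHom.comp_apply]
      rw [hcc]
    · rw [Polynomial.coeff_C_zero]
      exact Subalgebra.algebraMap_mem R' c
    · rw [Polynomial.coeff_C_zero, sub_self, mul_zero]
  -- the ratio case
  have hratioP : ∀ a b : Sf, stmt5Pred R' s
      (algebraMap (MvPolynomial Sf k) Q' (MvPolynomial.X a) /
        algebraMap (MvPolynomial Sf k) Q' (MvPolynomial.X b)) := by
    intro a b
    refine ⟨hratio_mem a b, Polynomial.C (algebraMap (MvPolynomial Sf k) Q' (MvPolynomial.X a) /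
        algebraMap (MvPolynomial Sf k) Q' (MvPolynomial.X b)), ?_, ?_, 0, zero_mem _, ?_⟩
    · rw [map_div₀, stmt5Psi_x a, stmt5Psi_x b, div_eq_iff (hiX b), ← map_mul]
      congr 1
      rw [mul_left_comm, ← Polynomial.C_mul, div_mul_cancel₀ _ (stmt5x_ne_zero b)]
    · rw [Polynomial.coeff_C_zero]; exact hratio_mem a b
    · rw [Polynomial.coeff_C_zero, sub_self, mul_zero]
  -- polynomials
  have hpoly : ∀ f : MvPolynomial Sf k, stmt5Pred R' s (algebraMap (MvPolynomial Sf k) Q' f) := by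
    intro f
    induction f using MvPolynomial.induction_on with
    | C a =>
        have hcc : algebraMap k Q' a = algebraMap (MvPolynomial Sf k) Q' (MvPolynomial.C a) := by
          rw [IsScalarTower.algebraMap_apply k (MvPolynomial Sf k) Q', MvPolynomial.algebraMap_eq]
        rw [← hcc]; exact hconst a
    | add f g hf hg => rw [map_add]; exact stmt5Pred_add hf hg
    | mul_X f n hf => rw [map_mul]; exact stmt5Pred_mul hf (hxt n)
  have hq' : q ∈ Algebra.adjoin k
      (Set.range (algebraMap (MvPolynomial Sf k) Q') ∪
        {q : Q' | ∃ s t : Sf, q = algebraMap (MvPolynomial Sf k) Q' (MvPolynomial.X s) /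
          algebraMap (MvPolynomial Sf k) Q' (MvPolynomial.X t)}) := hR' ▸ hq
  clear hq
  induction hq' using Algebra.adjoin_induction with
  | mem x hx =>
      rcases hx with ⟨f, rfl⟩ | ⟨a, b, rfl⟩
      · exact hpoly f
      · exact hratioP a b
  | algebraMap c => exact hconst c
  | add x y hx hy px py => exact stmt5Pred_add px py
  | mul x y hx hy px py => exact stmt5Pred_mul px py

end Aux

/-- Let `R = k[a_s : s ∈ S_f]` be a polynomial ring over a field, `Q = Frac R`,
and `R' = R[a_s/a_t : s,t ∈ S_f] ⊆ Q` the subring generated by `R` and all fractions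
`a_s / a_t`.  Then for any `s ∈ S_f` the ideal `𝔭' = R' a_s` is prime, and it does not
depend on the choice of `s`. -/
theorem stmt5 {k : Type*} [Field k] {Sf : Type*} [Finite Sf] [Nonempty Sf]
    (R' : Subalgebra k (FractionRing (MvPolynomial Sf k)))
    (hR' : R' = Algebra.adjoin k
      (Set.range (algebraMap (MvPolynomial Sf k) (FractionRing (MvPolynomial Sf k))) ∪
        {q : FractionRing (MvPolynomial Sf k) | ∃ s t : Sf,
          q = algebraMap (MvPolynomial Sf k) (FractionRing (MvPolynomial Sf k))
                (MvPolynomial.X s) /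
              algebraMap (MvPolynomial Sf k) (FractionRing (MvPolynomial Sf k))
                (MvPolynomial.X t)})) :
    ∀ s t : Sf, ∀ xs xt : R',
      (xs : FractionRing (MvPolynomial Sf k)) =
          algebraMap (MvPolynomial Sf k) (FractionRing (MvPolynomial Sf k))
            (MvPolynomial.X s) →
      (xt : FractionRing (MvPolynomial Sf k)) =
          algebraMap (MvPolynomial Sf k) (FractionRing (MvPolynomial Sf k))
            (MvPolynomial.X t) →
      (Ideal.span {xs}).IsPrime ∧ Ideal.span {xs} = Ideal.span {xt} := by
  intro s t xs xt hxs hxt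
  have key : ∀ q : R', stmt5Pred R' s (q : FractionRing (MvPolynomial Sf k)) :=
    fun q => stmt5_key hR' s q.2
  have hratio_mem : ∀ a b : Sf,
      algebraMap (MvPolynomial Sf k) (FractionRing (MvPolynomial Sf k)) (MvPolynomial.X a) /
        algebraMap (MvPolynomial Sf k) (FractionRing (MvPolynomial Sf k)) (MvPolynomial.X b)
        ∈ R' := by
    intro a b
    rw [hR']
    exact Algebra.subset_adjoin (Or.inr ⟨a, b, rfl⟩)
  have hxs0 : xs ≠ 0 := by
    intro h
    rw [h, ZeroMemClass.coe_zero] at hxs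
    exact stmt5x_ne_zero s hxs.symm
  have hprime : Prime xs := by
    refine ⟨hxs0, ?_, ?_⟩
    · -- not a unit
      intro hu
      obtain ⟨v, hv⟩ := isUnit_iff_exists_inv.mp hu
      obtain ⟨-, p, hp, -, -⟩ := key v
      have hQ : (xs : FractionRing (MvPolynomial Sf k)) * (v : FractionRing (MvPolynomial Sf k)) = 1 := by
        exact_mod_cast congrArg Subtype.val hv
      have h2 : stmt5Psi ((xs : FractionRing (MvPolynomial Sf k)) * (v : FractionRing (MvPolynomial Sf k))) = 1 := by
        rw [hQ, map_one]
      rw [map_mul, hxs, stmt5Psi_x, hp, ← map_mul, ← map_one (algebraMap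
        (Polynomial (FractionRing (MvPolynomial Sf k)))
        (FractionRing (Polynomial (FractionRing (MvPolynomial Sf k)))))] at h2
      have h3 := IsFractionRing.injective _ _ h2
      have h4 := congrArg (fun pp : Polynomial (FractionRing (MvPolynomial Sf k)) =>
        pp.coeff 0) h3
      simp only [Polynomial.mul_coeff_zero, Polynomial.coeff_X_zero, zero_mul,
        Polynomial.coeff_one_zero] at h4
      exact zero_ne_one h4
    · -- prime divisibility
      intro a b hab
      obtain ⟨d, hd⟩ := hab
      obtain ⟨-, pa, hpa, -, ra, hra, hea⟩ := key a
      obtain ⟨-, pb, hpb, -, rb, hrb, heb⟩ := key b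
      obtain ⟨-, pd, hpd, -, -⟩ := key d
      have hQ : (a : FractionRing (MvPolynomial Sf k)) * (b : FractionRing (MvPolynomial Sf k)) =
          (xs : FractionRing (MvPolynomial Sf k)) * (d : FractionRing (MvPolynomial Sf k)) := by
        exact_mod_cast congrArg Subtype.val hd
      have h2 : stmt5Psi ((a : FractionRing (MvPolynomial Sf k)) * (b : FractionRing (MvPolynomial Sf k))) =
          stmt5Psi ((xs : FractionRing (MvPolynomial Sf k)) * (d : FractionRing (MvPolynomial Sf k))) := congrArg _ hQ
      rw [map_mul, map_mul, hpa, hpb, hxs, stmt5Psi_x, hpd, ← map_mul, ← map_mul] at h2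
      have h3 := IsFractionRing.injective _ _ h2
      have h4 := congrArg (fun pp : Polynomial (FractionRing (MvPolynomial Sf k)) =>
        pp.coeff 0) h3
      simp only [Polynomial.mul_coeff_zero, Polynomial.coeff_X_zero, zero_mul] at h4
      rcases mul_eq_zero.mp h4 with h | h
      · left
        refine ⟨⟨ra, hra⟩, Subtype.ext ?_⟩
        push_cast
        rw [hxs, ← hea, h, sub_zero]
      · right
        refine ⟨⟨rb, hrb⟩, Subtype.ext ?_⟩
        push_cast
        rw [hxs, ← heb, h, sub_zero]
  refine ⟨(Ideal.span_singleton_prime hxs0).mpr hprime, ?_⟩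
  have hdvd : ∀ (u v : Sf) (xu xv : R'),
      (xu : FractionRing (MvPolynomial Sf k)) =
        algebraMap (MvPolynomial Sf k) (FractionRing (MvPolynomial Sf k)) (MvPolynomial.X u) →
      (xv : FractionRing (MvPolynomial Sf k)) =
        algebraMap (MvPolynomial Sf k) (FractionRing (MvPolynomial Sf k)) (MvPolynomial.X v) →
      xu ∣ xv := by
    intro u v xu xv hu hv
    refine ⟨⟨_, hratio_mem v u⟩, Subtype.ext ?_⟩
    push_cast
    rw [hu, hv, mul_comm, div_mul_cancel₀ _ (stmt5x_ne_zero u)]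
  exact le_antisymm
    (Ideal.span_singleton_le_span_singleton.mpr (hdvd t s xt xs hxt hxs))
    (Ideal.span_singleton_le_span_singleton.mpr (hdvd s t xs xt hxs hxt))
end

section
/- Deodhar's defect formula: for any expression $\underline{x} = \underline{s_1 s_2 \cdots s_m}$ in the generators of a Coxeter system, the product $\underline{H}_{\underline{x}} = \underline{H}_{s_1} \cdots \underline{H}_{s_m}$ in the Hecke algebra equals $\sum_{e} v^{d(e)} H_e$, where the sum runs over all $2^m$ subsequences $e \in \{0,1\}^m$, $H_e = H_{s_1^{e_1} \cdots s_m^{e_m}}$ (product in $W$), and $d(e)$ is the defect of $e$: the number of indices $i$ with $e_i = 0$ and $w_{i-1} s_i > w_{i-1}$ minus the number of indices $i$ with $e_i = 0$ and $w_{i-1} s_i < w_{i-1}$, where $w_i = s_1^{e_1}\cdots s_i^{e_i}$. -/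
open LaurentPolynomial

/-!
Multiplying on the right by `\underline{H}_s = H_s + v` sends `H_w` to `H_{ws} + v H_w` when
`ws > w` and to `H_{ws} + v⁻¹ H_w` when `ws < w`. So expanding the product
`\underline{H}_{s_1} ⋯ \underline{H}_{s_m}` one factor at a time, each subsequence `e` picks
either `H_{w s_i}` (`e_i = 1`, no power of `v`) or `v^{±1} H_w` (`e_i = 0`, the sign recording
whether `s_i` goes up or down from `w = w_{i-1}`), and the exponents add up to the defect.
-/

noncomputable section

namespace CoxeterSystem

variable {B W : Type*} [Group W] {M : CoxeterMatrix B} (cs : CoxeterSystem M W)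

/-- The letters `s_1^{e_1}, …, s_m^{e_m}`, where `s_j = cs.simple (c j)`; the product of the first
`i` of them is `w_i`. -/
def subexpressionWord {m : ℕ} (c : Fin m → B) (e : Fin m → Bool) : List W :=
  List.ofFn fun j => if e j then cs.simple (c j) else 1

def ascentSign (w : W) (i : B) : ℤ :=
  if cs.length w < cs.length (w * cs.simple i) then 1 else -1

def defect {m : ℕ} (c : Fin m → B) (e : Fin m → Bool) : ℤ :=
  ∑ i : Fin m, if e i then 0 else cs.ascentSign ((cs.subexpressionWord c e).take i).prod (c i)

@[simp]
theorem length_subexpressionWord {m : ℕ} (c : Fin m → B) (e : Fin m → Bool) :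
    (cs.subexpressionWord c e).length = m :=
  List.length_ofFn

theorem subexpressionWord_snoc {m : ℕ} (c : Fin m → B) (b : B) (e : Fin m → Bool) (x : Bool) :
    cs.subexpressionWord (Fin.snoc c b) (Fin.snoc e x) =
      cs.subexpressionWord c e ++ [if x then cs.simple b else 1] := by
  rw [subexpressionWord, List.ofFn_succ', List.concat_eq_append]
  simp only [Fin.snoc_castSucc, Fin.snoc_last]
  rfl

theorem defect_snoc {m : ℕ} (c : Fin m → B) (b : B) (e : Fin m → Bool) (x : Bool) :
    cs.defect (Fin.snoc c b) (Fin.snoc e x) =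
      cs.defect c e + if x then 0 else cs.ascentSign (cs.subexpressionWord c e).prod b := by
  have htake (k : ℕ) (hk : k ≤ m) :
      (cs.subexpressionWord (Fin.snoc c b) (Fin.snoc e x)).take k =
        (cs.subexpressionWord c e).take k := by
    rw [subexpressionWord_snoc, List.take_append_of_le_length (by simpa)]
  rw [defect, Fin.sum_univ_castSucc]
  simp only [Fin.snoc_castSucc, Fin.snoc_last, Fin.val_castSucc, Fin.val_last,
    htake _ (Fin.is_lt _).le, htake m le_rfl]
  rw [List.take_of_length_le (by simp)]
  rfl

variable {A : Type*} [Ring A] [Algebra (LaurentPolynomial ℤ) A] (H : W → A)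

theorem mul_simple_add_T_one
    (hgt : ∀ (w : W) (i : B), cs.length (w * cs.simple i) = cs.length w + 1 →
      H w * H (cs.simple i) = H (w * cs.simple i))
    (hlt : ∀ (w : W) (i : B), cs.length (w * cs.simple i) + 1 = cs.length w →
      H w * H (cs.simple i) = H (w * cs.simple i) +
        algebraMap (LaurentPolynomial ℤ) A (T (-1) - T 1) * H w)
    (w : W) (i : B) :
    H w * (H (cs.simple i) + algebraMap (LaurentPolynomial ℤ) A (T 1)) =
      H (w * cs.simple i) + algebraMap (LaurentPolynomial ℤ) A (T (cs.ascentSign w i)) * H w := by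
  rw [mul_add, ← Algebra.commutes, ascentSign]
  rcases cs.length_mul_simple w i with h | h
  · rw [hgt w i h, if_pos (by omega)]
  · rw [hlt w i h, if_neg (by omega), map_sub, sub_mul]
    abel

theorem prod_ofFn_simple_add_T_one (hone : H 1 = 1)
    (hgt : ∀ (w : W) (i : B), cs.length (w * cs.simple i) = cs.length w + 1 →
      H w * H (cs.simple i) = H (w * cs.simple i))
    (hlt : ∀ (w : W) (i : B), cs.length (w * cs.simple i) + 1 = cs.length w →
      H w * H (cs.simple i) = H (w * cs.simple i) +
        algebraMap (LaurentPolynomial ℤ) A (T (-1) - T 1) * H w)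
    {m : ℕ} (c : Fin m → B) :
    (List.ofFn fun i => H (cs.simple (c i)) + algebraMap (LaurentPolynomial ℤ) A (T 1)).prod =
      ∑ e : Fin m → Bool, algebraMap (LaurentPolynomial ℤ) A (T (cs.defect c e)) *
        H (cs.subexpressionWord c e).prod := by
  induction c using Fin.snocInduction with
  | elim0 => simp [defect, subexpressionWord, hone]
  | snoc c b ih =>
    rw [List.ofFn_succ']
    simp only [Fin.snoc_castSucc, Fin.snoc_last, List.concat_eq_append, List.prod_append,
      List.prod_singleton, ih, Finset.sum_mul]
    rw [← (Fin.snocEquiv fun _ => Bool).sum_comp, Fintype.sum_prod_type_right]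
    refine Finset.sum_congr rfl fun e _ => ?_
    rw [mul_assoc, mul_simple_add_T_one cs H hgt hlt]
    simp only [Fintype.sum_bool, Fin.snocEquiv, Equiv.coe_fn_mk, defect_snoc,
      subexpressionWord_snoc, List.prod_append, List.prod_singleton, if_true, Bool.false_eq_true,
      if_false, mul_one, T_zero, T_add, map_one, map_mul, one_mul, mul_assoc, mul_add]

end CoxeterSystem

end

/-- Deodhar's defect formula: for any expression `s_1 ⋯ s_m` in the simple
reflections of a Coxeter system, in the Hecke algebra one has
`\underline{H}_{s_1} ⋯ \underline{H}_{s_m} = ∑_e v^{d(e)} H_e` where the sum runs over all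
`2^m` subsequences `e ∈ {0,1}^m`, `H_e = H_{s_1^{e_1} ⋯ s_m^{e_m}}`, and the defect `d(e)`
counts indices `i` with `e_i = 0` and `w_{i-1} s_i > w_{i-1}` minus those with `e_i = 0`
and `w_{i-1} s_i < w_{i-1}` (`w_i = s_1^{e_1} ⋯ s_i^{e_i}`; `w s > w` iff
`ℓ(w s) > ℓ(w)`).  The Hecke algebra is formalized as any `ℤ[v^{±1}]`-algebra `A` equipped
with a standard basis map `H : W → A` satisfying the defining multiplication rules. -/
theorem stmt13 {B W : Type*} [Group W] {M : CoxeterMatrix B} (cs : CoxeterSystem M W)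
    {A : Type*} [Ring A] [Algebra (LaurentPolynomial ℤ) A]
    (H : W → A)
    (hone : H 1 = 1)
    (hgt : ∀ (w : W) (i : B), cs.length (w * cs.simple i) = cs.length w + 1 →
      H w * H (cs.simple i) = H (w * cs.simple i))
    (hlt : ∀ (w : W) (i : B), cs.length (w * cs.simple i) + 1 = cs.length w →
      H w * H (cs.simple i) = H (w * cs.simple i) +
        algebraMap (LaurentPolynomial ℤ) A (T (-1) - T 1) * H w)
    (l : List B) :
    (l.map fun i => H (cs.simple i) + algebraMap (LaurentPolynomial ℤ) A (T 1)).prod =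
      ∑ f : Fin l.length → Bool,
        algebraMap (LaurentPolynomial ℤ) A
            (T (∑ i : Fin l.length,
              if f i then (0 : ℤ)
              else
                if cs.length
                      ((List.ofFn fun j : Fin l.length =>
                        if f j then cs.simple (l.get j) else 1).take i.1).prod <
                    cs.length
                      (((List.ofFn fun j : Fin l.length =>
                        if f j then cs.simple (l.get j) else 1).take i.1).prod *
                        cs.simple (l.get i))
                then 1 else -1)) *
          H (List.ofFn fun j : Fin l.length =>
              if f j then cs.simple (l.get j) else 1).prod := by
  rw [← List.ofFn_getElem_eq_map]
  exact cs.prod_ofFn_simple_add_T_one H hone hgt hlt l.get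
end
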